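/- Let x, x̃ : ℝ → ℝ^d (with the Euclidean norm) and let f₁, f₂ : ℝ^d → ℝ^d be Lipschitz continuous with Lipschitz constants L₁ and L₂ respectively. Assume there are constants μ, η > 0 with ‖f₁(z) − f₂(z)‖ ≤ μ for all z ∈ ℝ^d. Let 0 = T₀ < T₁ < T₂ and 0 < t̆ ≤ T₁ with T₁ − t̆ ≤ η. Suppose x satisfies x(0) = x₀, x′(t) = f₁(x(t)) for t ∈ (0, T₁] and x′(t) = f₂(x(t)) for t ∈ (T₁, T₂], while x̃ satisfies x̃(0) = x₀, x̃′(t) = f₁(x̃(t)) for t ∈ (0, t̆] and x̃′(t) = f₂(x̃(t)) for t ∈ (t̆, T₂], and both x and x̃ are continuous on [0, T₂]. Then: ‖x(t) − x̃(t)‖ = 0 for t ∈ (0, t̆]; ‖x(t) − x̃(t)‖ ≤ μ (t − t̆) exp(max(L₁, L₂)(t − t̆)) for t ∈ (t̆, T₁]; and ‖x(t) − x̃(t)‖ ≤ μ η exp(L₂(t − T₁) + max(L₁, L₂) η) for t ∈ (T₁, T₂]. -/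

import Mathlib

/-!
On `[0, t̆]` both systems follow `f₁` from the same initial value, so Grönwall's inequality forces
them to coincide. On `[t̆, T₁]` one follows `f₁` and the other `f₂`; their mismatch `μ` enters
Grönwall's inequality as a constant forcing term, which yields `μ (t - t̆) exp (K (t - t̆))` with
`K = max L₁ L₂`. On `[T₁, T₂]` both follow `f₂`, so the error at `T₁`, at most
`μ η exp (K η)`, is propagated by the factor `exp (L₂ (t - T₁))`.
-/

open Set Real Filter Topology

theorem nonneg_of_norm_sub_le_mul {E F : Type*} [NormedAddCommGroup E] [Nontrivial E]
    [SeminormedAddCommGroup F] {f : E → F} {L : ℝ} (hf : ∀ a b, ‖f a - f b‖ ≤ L * ‖a - b‖) :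
    0 ≤ L := by
  obtain ⟨a, b, hab⟩ := exists_pair_ne E
  exact nonneg_of_mul_nonneg_left ((norm_nonneg _).trans (hf a b))
    (norm_pos_iff.2 (sub_ne_zero.2 hab))

theorem continuous_gronwallBound (K ε : ℝ) :
    Continuous fun p : ℝ × ℝ => gronwallBound p.1 K ε p.2 := by
  by_cases hK : K = 0
  · simp only [gronwallBound, if_pos hK]
    fun_prop
  · simp only [gronwallBound, if_neg hK]
    fun_prop

theorem gronwallBound_zero_le_mul_exp {K ε : ℝ} (hK : 0 ≤ K) (hε : 0 ≤ ε) (x : ℝ) :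
    gronwallBound 0 K ε x ≤ ε * x * exp (K * x) := by
  rcases hK.eq_or_lt with rfl | hK
  · simp [gronwallBound_K0]
  simp only [gronwallBound_of_K_ne_0 hK.ne', zero_mul, zero_add]
  -- convexity of `exp`: its tangent line at `K * x` lies below it at `0`
  have tangent : exp (K * x) - 1 ≤ K * x * exp (K * x) := by
    have h := mul_le_mul_of_nonneg_right (one_sub_le_exp_neg (K * x)) (exp_pos (K * x)).le
    rw [← exp_add, neg_add_cancel, exp_zero] at h
    linarith
  calc ε / K * (exp (K * x) - 1) ≤ ε / K * (K * x * exp (K * x)) := by gcongr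
    _ = ε * x * exp (K * x) := by field_simp

section Gronwall

variable {E : Type*} [NormedAddCommGroup E] [NormedSpace ℝ E]

/-- Grönwall's inequality when the derivative is only known on the open interval: apply the
right-derivative version on `[s, t]` and let `s` decrease to `a`. -/
theorem norm_le_gronwallBound_of_hasDerivAt_Ioo {f f' : ℝ → E} {K ε a b : ℝ}
    (hf : ContinuousOn f (Icc a b)) (hf' : ∀ t ∈ Ioo a b, HasDerivAt f (f' t) t)
    (bound : ∀ t ∈ Ioo a b, ‖f' t‖ ≤ K * ‖f t‖ + ε) :
    ∀ t ∈ Icc a b, ‖f t‖ ≤ gronwallBound ‖f a‖ K ε (t - a) := by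
  rintro t ⟨hat, htb⟩
  rcases hat.eq_or_lt with rfl | hat
  · simp [gronwallBound_x0]
  have from_interior : ∀ s ∈ Ioo a t, ‖f t‖ ≤ gronwallBound ‖f s‖ K ε (t - s) := fun s hs =>
    have sub : ∀ u ∈ Ico s t, u ∈ Ioo a b := fun u hu => ⟨hs.1.trans_le hu.1, hu.2.trans_le htb⟩
    norm_le_gronwallBound_of_norm_deriv_right_le (hf.mono (Icc_subset_Icc hs.1.le htb))
      (fun u hu => (hf' u (sub u hu)).hasDerivWithinAt) le_rfl
      (fun u hu => bound u (sub u hu)) t ⟨hs.2.le, le_rfl⟩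
  have hfa : Tendsto f (𝓝[Ioo a t] a) (𝓝 (f a)) :=
    (hf a ⟨le_rfl, hat.le.trans htb⟩).mono (Ioo_subset_Icc_self.trans (Icc_subset_Icc le_rfl htb))
  have hlim : Tendsto (fun s => gronwallBound ‖f s‖ K ε (t - s)) (𝓝[Ioo a t] a)
      (𝓝 (gronwallBound ‖f a‖ K ε (t - a))) :=
    ((continuous_gronwallBound K ε).tendsto _).comp
      (hfa.norm.prodMk_nhds (tendsto_const_nhds.sub (tendsto_id.mono_left nhdsWithin_le_nhds)))
  have := left_nhdsWithin_Ioo_neBot hat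
  exact ge_of_tendsto hlim (eventually_nhdsWithin_of_forall from_interior)

theorem norm_sub_le_gronwallBound_of_hasDerivAt_Ioo {g h : E → E} {x y : ℝ → E} {K ε a b : ℝ}
    (hg : ∀ u v, ‖g u - g v‖ ≤ K * ‖u - v‖) (hgh : ∀ z, ‖g z - h z‖ ≤ ε)
    (hx : ContinuousOn x (Icc a b)) (hy : ContinuousOn y (Icc a b))
    (hx' : ∀ t ∈ Ioo a b, HasDerivAt x (g (x t)) t)
    (hy' : ∀ t ∈ Ioo a b, HasDerivAt y (h (y t)) t) :
    ∀ t ∈ Icc a b, ‖x t - y t‖ ≤ gronwallBound ‖x a - y a‖ K ε (t - a) :=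
  norm_le_gronwallBound_of_hasDerivAt_Ioo (hx.sub hy) (fun t ht => (hx' t ht).sub (hy' t ht))
    fun t _ => calc
      ‖g (x t) - h (y t)‖ ≤ ‖g (x t) - g (y t)‖ + ‖g (y t) - h (y t)‖ :=
        norm_sub_le_norm_sub_add_norm_sub _ _ _
      _ ≤ K * ‖x t - y t‖ + ε := add_le_add (hg _ _) (hgh _)

theorem norm_sub_le_mul_exp_of_hasDerivAt_Ioo {g : E → E} {x y : ℝ → E} {K a b : ℝ}
    (hg : ∀ u v, ‖g u - g v‖ ≤ K * ‖u - v‖)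
    (hx : ContinuousOn x (Icc a b)) (hy : ContinuousOn y (Icc a b))
    (hx' : ∀ t ∈ Ioo a b, HasDerivAt x (g (x t)) t)
    (hy' : ∀ t ∈ Ioo a b, HasDerivAt y (g (y t)) t) :
    ∀ t ∈ Icc a b, ‖x t - y t‖ ≤ ‖x a - y a‖ * exp (K * (t - a)) := fun t ht => by
  simpa only [gronwallBound_ε0] using
    norm_sub_le_gronwallBound_of_hasDerivAt_Ioo (ε := 0) hg (fun z => by simp) hx hy hx' hy' t ht

theorem switched_system_comparison_early_of_nonneg {f₁ f₂ : E → E} {x xt : ℝ → E}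
    {L₁ L₂ μ η T₁ T₂ tb : ℝ}
    (hL₁ : 0 ≤ L₁) (hf₁ : ∀ a b, ‖f₁ a - f₁ b‖ ≤ L₁ * ‖a - b‖)
    (hf₂ : ∀ a b, ‖f₂ a - f₂ b‖ ≤ L₂ * ‖a - b‖) (hdiff : ∀ z, ‖f₁ z - f₂ z‖ ≤ μ)
    (hT₁₂ : T₁ ≤ T₂) (htbpos : 0 < tb) (htb₁ : tb ≤ T₁) (htbη : T₁ - tb ≤ η)
    (hx0 : x 0 = xt 0)
    (hx1 : ∀ t ∈ Ioc 0 T₁, HasDerivAt x (f₁ (x t)) t)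
    (hx2 : ∀ t ∈ Ioc T₁ T₂, HasDerivAt x (f₂ (x t)) t)
    (hxt1 : ∀ t ∈ Ioc 0 tb, HasDerivAt xt (f₁ (xt t)) t)
    (hxt2 : ∀ t ∈ Ioc tb T₂, HasDerivAt xt (f₂ (xt t)) t)
    (hxc : ContinuousOn x (Icc 0 T₂)) (hxtc : ContinuousOn xt (Icc 0 T₂)) :
    (∀ t ∈ Ioc 0 tb, ‖x t - xt t‖ = 0) ∧
    (∀ t ∈ Ioc tb T₁, ‖x t - xt t‖ ≤ μ * (t - tb) * exp (max L₁ L₂ * (t - tb))) ∧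
    (∀ t ∈ Ioc T₁ T₂, ‖x t - xt t‖ ≤ μ * η * exp (L₂ * (t - T₁) + max L₁ L₂ * η)) := by
  have hμ : 0 ≤ μ := (norm_nonneg _).trans (hdiff 0)
  have hη : 0 ≤ η := by linarith
  set K := max L₁ L₂
  have hK : 0 ≤ K := hL₁.trans (le_max_left _ _)
  have hf₁K : ∀ a b, ‖f₁ a - f₁ b‖ ≤ K * ‖a - b‖ := fun a b =>
    (hf₁ a b).trans (by gcongr; exact le_max_left _ _)
  have phase₁ : ∀ t ∈ Icc 0 tb, ‖x t - xt t‖ = 0 := fun t ht => by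
    have h := norm_sub_le_mul_exp_of_hasDerivAt_Ioo hf₁
      (hxc.mono (Icc_subset_Icc_right (by linarith)))
      (hxtc.mono (Icc_subset_Icc_right (by linarith)))
      (fun s hs => hx1 s ⟨hs.1, by linarith [hs.2]⟩)
      (fun s hs => hxt1 s (Ioo_subset_Ioc_self hs)) t ht
    rw [hx0, sub_self, norm_zero, zero_mul] at h
    exact le_antisymm h (norm_nonneg _)
  have phase₂ : ∀ t ∈ Icc tb T₁, ‖x t - xt t‖ ≤ μ * (t - tb) * exp (K * (t - tb)) := fun t ht => by
    have h := norm_sub_le_gronwallBound_of_hasDerivAt_Ioo hf₁K hdiff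
      (hxc.mono (Icc_subset_Icc htbpos.le (by linarith)))
      (hxtc.mono (Icc_subset_Icc htbpos.le (by linarith)))
      (fun s hs => hx1 s ⟨htbpos.trans hs.1, hs.2.le⟩)
      (fun s hs => hxt2 s ⟨hs.1, by linarith [hs.2]⟩) t ht
    rw [phase₁ tb ⟨htbpos.le, le_rfl⟩] at h
    exact h.trans (gronwallBound_zero_le_mul_exp hK hμ _)
  refine ⟨fun t ht => phase₁ t (Ioc_subset_Icc_self ht),
    fun t ht => phase₂ t (Ioc_subset_Icc_self ht), fun t ht => ?_⟩
  have at_T₁ : ‖x T₁ - xt T₁‖ ≤ μ * η * exp (K * η) :=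
    (phase₂ T₁ ⟨htb₁, le_rfl⟩).trans (by gcongr)
  calc ‖x t - xt t‖ ≤ ‖x T₁ - xt T₁‖ * exp (L₂ * (t - T₁)) :=
        norm_sub_le_mul_exp_of_hasDerivAt_Ioo hf₂
          (hxc.mono (Icc_subset_Icc (by linarith) le_rfl))
          (hxtc.mono (Icc_subset_Icc (by linarith) le_rfl))
          (fun s hs => hx2 s (Ioo_subset_Ioc_self hs))
          (fun s hs => hxt2 s ⟨htb₁.trans_lt hs.1, hs.2.le⟩) t (Ioc_subset_Icc_self ht)
    _ ≤ μ * η * exp (K * η) * exp (L₂ * (t - T₁)) := by gcongr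
    _ = μ * η * exp (L₂ * (t - T₁) + K * η) := by rw [exp_add]; ring

end Gronwall

theorem switched_system_auxiliary_comparison_early_general
    {d : ℕ}
    (f₁ f₂ : EuclideanSpace ℝ (Fin d) → EuclideanSpace ℝ (Fin d))
    (x xt : ℝ → EuclideanSpace ℝ (Fin d))
    (x₀ : EuclideanSpace ℝ (Fin d))
    (L₁ L₂ μ η T₁ T₂ tb : ℝ)
    (hf₁ : ∀ a b, ‖f₁ a - f₁ b‖ ≤ L₁ * ‖a - b‖)
    (hf₂ : ∀ a b, ‖f₂ a - f₂ b‖ ≤ L₂ * ‖a - b‖)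
    (hdiff : ∀ z, ‖f₁ z - f₂ z‖ ≤ μ)
    (hT₁₂ : T₁ < T₂)
    (htbpos : 0 < tb) (htb₁ : tb ≤ T₁) (htbη : T₁ - tb ≤ η)
    (hx0 : x 0 = x₀) (hxt0 : xt 0 = x₀)
    (hx1 : ∀ t ∈ Set.Ioc (0 : ℝ) T₁, HasDerivAt x (f₁ (x t)) t)
    (hx2 : ∀ t ∈ Set.Ioc T₁ T₂, HasDerivAt x (f₂ (x t)) t)
    (hxt1 : ∀ t ∈ Set.Ioc (0 : ℝ) tb, HasDerivAt xt (f₁ (xt t)) t)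
    (hxt2 : ∀ t ∈ Set.Ioc tb T₂, HasDerivAt xt (f₂ (xt t)) t)
    (hxc : ContinuousOn x (Set.Icc 0 T₂))
    (hxtc : ContinuousOn xt (Set.Icc 0 T₂)) :
    (∀ t ∈ Set.Ioc (0 : ℝ) tb, ‖x t - xt t‖ = 0) ∧
    (∀ t ∈ Set.Ioc tb T₁,
      ‖x t - xt t‖ ≤ μ * (t - tb) * Real.exp (max L₁ L₂ * (t - tb))) ∧
    (∀ t ∈ Set.Ioc T₁ T₂,
      ‖x t - xt t‖ ≤ μ * η * Real.exp (L₂ * (t - T₁) + max L₁ L₂ * η)) := by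
  -- for `d = 0` the Lipschitz constants may be negative, but then `x t = xt t` trivially
  rcases subsingleton_or_nontrivial (EuclideanSpace ℝ (Fin d)) with hE | hE
  · have hμ : 0 ≤ μ := (norm_nonneg _).trans (hdiff 0)
    have hη : 0 ≤ η := by linarith
    have h0 : ∀ t, ‖x t - xt t‖ = 0 := fun t => by
      rw [Subsingleton.elim (x t) (xt t), sub_self, norm_zero]
    refine ⟨fun t _ => h0 t, fun t ht => ?_, fun t _ => ?_⟩ <;> rw [h0]
    · have := sub_nonneg.2 ht.1.le
      positivity
    · positivity
  exact switched_system_comparison_early_of_nonneg (nonneg_of_norm_sub_le_mul hf₁) hf₁ hf₂ hdiff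
    hT₁₂.le htbpos htb₁ htbη (hx0.trans hxt0.symm) hx1 hx2 hxt1 hxt2 hxc hxtc

/-- Proposition 1 (case t̆ ≤ T₁): comparison between the true switched system `x`
(switching from `f₁` to `f₂` at time `T₁`) and the auxiliary system `xt`
(switching at the approximate switching time `tb ≤ T₁`). -/
theorem switched_system_auxiliary_comparison_early
    {d : ℕ}
    (f₁ f₂ : EuclideanSpace ℝ (Fin d) → EuclideanSpace ℝ (Fin d))
    (x xt : ℝ → EuclideanSpace ℝ (Fin d))
    (x₀ : EuclideanSpace ℝ (Fin d))
    (L₁ L₂ μ η T₁ T₂ tb : ℝ)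
    (hf₁ : ∀ a b, ‖f₁ a - f₁ b‖ ≤ L₁ * ‖a - b‖)
    (hf₂ : ∀ a b, ‖f₂ a - f₂ b‖ ≤ L₂ * ‖a - b‖)
    (hμ : 0 < μ) (hη : 0 < η)
    (hdiff : ∀ z, ‖f₁ z - f₂ z‖ ≤ μ)
    (hT₁pos : 0 < T₁) (hT₁₂ : T₁ < T₂)
    (htbpos : 0 < tb) (htb₁ : tb ≤ T₁) (htbη : T₁ - tb ≤ η)
    (hx0 : x 0 = x₀) (hxt0 : xt 0 = x₀)
    (hx1 : ∀ t ∈ Set.Ioc (0 : ℝ) T₁, HasDerivAt x (f₁ (x t)) t)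
    (hx2 : ∀ t ∈ Set.Ioc T₁ T₂, HasDerivAt x (f₂ (x t)) t)
    (hxt1 : ∀ t ∈ Set.Ioc (0 : ℝ) tb, HasDerivAt xt (f₁ (xt t)) t)
    (hxt2 : ∀ t ∈ Set.Ioc tb T₂, HasDerivAt xt (f₂ (xt t)) t)
    (hxc : ContinuousOn x (Set.Icc 0 T₂))
    (hxtc : ContinuousOn xt (Set.Icc 0 T₂)) :
    (∀ t ∈ Set.Ioc (0 : ℝ) tb, ‖x t - xt t‖ = 0) ∧
    (∀ t ∈ Set.Ioc tb T₁,
      ‖x t - xt t‖ ≤ μ * (t - tb) * Real.exp (max L₁ L₂ * (t - tb))) ∧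
    (∀ t ∈ Set.Ioc T₁ T₂,
      ‖x t - xt t‖ ≤ μ * η * Real.exp (L₂ * (t - T₁) + max L₁ L₂ * η)) :=
  switched_system_auxiliary_comparison_early_general f₁ f₂ x xt x₀ L₁ L₂ μ η T₁ T₂ tb hf₁ hf₂ hdiff
    hT₁₂ htbpos htb₁ htbη hx0 hxt0 hx1 hx2 hxt1 hxt2 hxc hxtc
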